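/- arXiv:2505.16910 — 2 statements merged into one kernel-verified Lean document; each statement's English description precedes it below -/
import Mathlib

section
/- Let $\mathbb{F}_q$ be a finite field of odd order $q > 5$. For every $\epsilon_1, \epsilon_2, \epsilon_3 \in \mathbb{F}_q^\ast$ and every $\lambda \in \mathbb{F}_q$, there exist $s_1, s_2, s_3 \in \mathbb{F}_q^\ast$ such that $\epsilon_1 s_1^2 + \epsilon_2 s_2^2 = \epsilon_3 s_3^2 + \lambda$. -/
open Polynomial

/-- Pick an element avoiding `0` and two prescribed square values. -/
lemma avoid3 {F : Type*} [Field F] [Fintype F] (h5 : 5 < Fintype.card F) (a b : F) :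
    ∃ m : F, m ≠ 0 ∧ m ^ 2 ≠ a ∧ m ^ 2 ≠ b := by
  by_contra h
  push_neg at h
  set p : F[X] := X * (X ^ 2 - C a) * (X ^ 2 - C b) with hp
  have hmon : p.Monic :=
    ((monic_X.mul (monic_X_pow_sub_C a two_ne_zero)).mul (monic_X_pow_sub_C b two_ne_zero))
  have hpd : p.natDegree = 5 := by rw [hp]; compute_degree!
  have hpz : p = 0 := by
    apply Polynomial.eq_zero_of_natDegree_lt_card_of_eval_eq_zero p Function.injective_id
    · intro m
      rcases em (m = 0) with rfl | hm
      · simp [hp]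
      · by_cases h1 : m ^ 2 = a
        · simp [hp, sub_eq_zero, ← h1]
        · simp [hp, sub_eq_zero, ← h m hm h1]
    · omega
  exact hmon.ne_zero hpz

/-- From a point on a conic with second coordinate `0`, produce a point with both
coordinates nonzero. -/
lemma conic_half {F : Type*} [Field F] [Fintype F] (h2 : (2 : F) ≠ 0)
    (h5 : 5 < Fintype.card F) {ε₁ ε₂ x₀ : F} (hε₁ : ε₁ ≠ 0) (hε₂ : ε₂ ≠ 0) (hx₀ : x₀ ≠ 0) :
    ∃ x y : F, x ≠ 0 ∧ y ≠ 0 ∧ ε₁ * x ^ 2 + ε₂ * y ^ 2 = ε₁ * x₀ ^ 2 := by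
  obtain ⟨m, hm, hma, hmb⟩ := avoid3 h5 (-ε₂ / ε₁) (ε₂ / ε₁)
  have hd : ε₁ * m ^ 2 + ε₂ ≠ 0 := by
    intro h
    apply hma
    field_simp
    linear_combination h
  have hd' : ε₂ - ε₁ * m ^ 2 ≠ 0 := by
    intro h
    apply hmb
    field_simp
    linear_combination -h
  set t : F := -(2 * ε₁ * x₀ * m) / (ε₁ * m ^ 2 + ε₂) with ht
  have hty : t ≠ 0 := by
    apply div_ne_zero _ hd
    exact neg_ne_zero.mpr (by simp [h2, hε₁, hx₀, hm])
  have hx : x₀ + t * m ≠ 0 := by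
    have : (x₀ + t * m) * (ε₁ * m ^ 2 + ε₂) = x₀ * (ε₂ - ε₁ * m ^ 2) := by
      rw [ht]; field_simp; ring
    intro h
    rw [h, zero_mul] at this
    exact mul_ne_zero hx₀ hd' this.symm
  refine ⟨x₀ + t * m, t, hx, hty, ?_⟩
  rw [ht]
  field_simp
  ring

/-- Every nonzero `c` is represented by `ε₁ x² + ε₂ y²` with `x, y` nonzero. -/
lemma conic_repr {F : Type*} [Field F] [Fintype F] (hodd : Odd (Fintype.card F))
    (h5 : 5 < Fintype.card F) {ε₁ ε₂ c : F} (hε₁ : ε₁ ≠ 0) (hε₂ : ε₂ ≠ 0) (hc : c ≠ 0) :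
    ∃ x y : F, x ≠ 0 ∧ y ≠ 0 ∧ ε₁ * x ^ 2 + ε₂ * y ^ 2 = c := by
  have h2 : (2 : F) ≠ 0 := by
    apply Ring.two_ne_zero
    intro hchar
    have := FiniteField.even_card_of_char_two hchar
    rw [Nat.odd_iff] at hodd
    omega
  -- first find any point on the conic
  obtain ⟨x₀, y₀, hxy⟩ :
      ∃ x₀ y₀ : F, (C ε₁ * X ^ 2).eval x₀ + (C ε₂ * X ^ 2 - C c).eval y₀ = 0 := by
    apply FiniteField.exists_root_sum_quadratic
    · rw [degree_C_mul_X_pow _ hε₁]; norm_num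
    · rw [sub_eq_add_neg, ← C_neg]
      rw [Polynomial.degree_add_C (by rw [degree_C_mul_X_pow _ hε₂]; norm_num),
        degree_C_mul_X_pow _ hε₂]
      · norm_num
    · exact Nat.odd_iff.mp hodd
  simp only [eval_add, eval_sub, eval_mul, eval_pow, eval_C, eval_X] at hxy
  have hpt : ε₁ * x₀ ^ 2 + ε₂ * y₀ ^ 2 = c := by linear_combination hxy
  rcases em (x₀ = 0) with hx0 | hx0
  · -- then y₀ ≠ 0 and c = ε₂ y₀²
    have hy0 : y₀ ≠ 0 := by
      intro h; apply hc; rw [← hpt, hx0, h]; ring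
    have hc2 : c = ε₂ * y₀ ^ 2 := by rw [← hpt, hx0]; ring
    obtain ⟨x, y, hx, hy, hxyeq⟩ := conic_half h2 h5 hε₂ hε₁ hy0
    exact ⟨y, x, hy, hx, by rw [hc2, ← hxyeq]; ring⟩
  · rcases em (y₀ = 0) with hy0 | hy0
    · have hc2 : c = ε₁ * x₀ ^ 2 := by rw [← hpt, hy0]; ring
      obtain ⟨x, y, hx, hy, hxyeq⟩ := conic_half h2 h5 hε₁ hε₂ hx0
      exact ⟨x, y, hx, hy, by rw [hc2, ← hxyeq]⟩
    · exact ⟨x₀, y₀, hx0, hy0, hpt⟩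

/-- Lemma on representing sums of scaled nonzero squares in a finite field of odd order `> 5`. -/
theorem stmt0 {F : Type*} [Field F] [Fintype F]
    (hodd : Odd (Fintype.card F)) (h5 : 5 < Fintype.card F)
    (ε₁ ε₂ ε₃ : F) (hε₁ : ε₁ ≠ 0) (hε₂ : ε₂ ≠ 0) (hε₃ : ε₃ ≠ 0) (lam : F) :
    ∃ s₁ s₂ s₃ : F, s₁ ≠ 0 ∧ s₂ ≠ 0 ∧ s₃ ≠ 0 ∧
      ε₁ * s₁ ^ 2 + ε₂ * s₂ ^ 2 = ε₃ * s₃ ^ 2 + lam := by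
  classical
  -- choose s₃ with ε₃ s₃² + lam ≠ 0
  obtain ⟨s₃, hs₃, hc⟩ : ∃ s₃ : F, s₃ ≠ 0 ∧ ε₃ * s₃ ^ 2 + lam ≠ 0 := by
    by_contra h
    push_neg at h
    set p : F[X] := C ε₃ * X ^ 2 + C lam with hp
    have hpd : p.natDegree = 2 := by rw [hp]; compute_degree!
    have hpz : p = 0 := by
      apply Polynomial.eq_zero_of_natDegree_lt_card_of_eval_eq_zero'
        p (Finset.univ.erase 0)
        (fun i hi => by
          simp only [hp, eval_add, eval_mul, eval_pow, eval_C, eval_X]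
          exact h i (Finset.ne_of_mem_erase hi))
      rw [hpd, Finset.card_erase_of_mem (Finset.mem_univ 0), Finset.card_univ]
      omega
    apply hε₃
    have := congrArg (fun q => Polynomial.coeff q 2) hpz
    simpa [hp, coeff_C] using this
  obtain ⟨s₁, s₂, hs₁, hs₂, heq⟩ := conic_repr hodd h5 hε₁ hε₂ hc
  exact ⟨s₁, s₂, s₃, hs₁, hs₂, hs₃, heq⟩
end

section
/- Let $\mathbb{F}_q$ be a finite field of odd order $q > 5$, and let $c_1,\dots,c_6 \in \mathbb{F}_q$ with $c_1c_4 - c_2c_3 \neq 0$, $c_1c_6 - c_2c_5 \neq 0$, and $c_3c_6 - c_4c_5 \neq 0$. Then for all $\delta_1,\delta_2,\delta_3 \in \mathbb{F}_q^\ast$ and all $\lambda_1,\lambda_2,\lambda_3 \in \mathbb{F}_q$, there exist $u, v \in \mathbb{F}_q$ and $s_1, s_2, s_3 \in \mathbb{F}_q^\ast$ such that $c_1 u + c_2 v = \delta_1 s_1^2 + \lambda_1$, $c_3 u + c_4 v = \delta_2 s_2^2 + \lambda_2$, and $c_5 u + c_6 v = \delta_3 s_3^2 + \lambda_3$. -/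
open Polynomial

/-- In a finite field, a nonzero polynomial of degree less than the cardinality
has a non-root. -/
lemma exists_not_root {F : Type*} [Field F] [Fintype F] (p : F[X]) (hp : p ≠ 0)
    (h : p.natDegree < Fintype.card F) : ∃ x : F, p.eval x ≠ 0 := by
  classical
  by_contra hall
  push_neg at hall
  have hsub : (Finset.univ : Finset F) ⊆ p.roots.toFinset := by
    intro x _
    simp [Multiset.mem_toFinset, mem_roots, hp, hall x]
  have := Finset.card_le_card hsub
  have h2 := Multiset.toFinset_card_le p.roots
  have h3 := p.card_roots' 
  simp [Finset.card_univ] at this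
  omega

/-- Key lemma: a nondegenerate binary quadratic form represents every nonzero
element with both coordinates nonzero, over a finite field of odd order > 5. -/
lemma key {F : Type*} [Field F] [Fintype F]
    (hodd : Fintype.card F % 2 = 1) (h5 : 5 < Fintype.card F)
    (a b e : F) (ha : a ≠ 0) (hb : b ≠ 0) (he : e ≠ 0) :
    ∃ x y : F, x ≠ 0 ∧ y ≠ 0 ∧ a * x ^ 2 + b * y ^ 2 = e := by
  classical
  have hchar : ringChar F ≠ 2 := fun hc => by
    have := FiniteField.even_card_iff_char_two.mp hc; omega
  have h2 : (2 : F) ≠ 0 := Ring.two_ne_zero hchar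
  -- a base point
  obtain ⟨x₀, y₀, hxy⟩ := FiniteField.exists_root_sum_quadratic
    (f := C a * X ^ 2 - C e) (g := C b * X ^ 2)
    (by
      rw [sub_eq_add_neg, ← C_neg]
      compute_degree!) (by compute_degree!) hodd
  simp only [eval_add, eval_sub, eval_mul, eval_pow, eval_C, eval_X] at hxy
  have hxy : a * x₀ ^ 2 + b * y₀ ^ 2 = e := by linear_combination hxy
  -- general step: from a base point with first coordinate possibly 0, get both nonzero
  have main : ∀ a b x₀ y₀ : F, a ≠ 0 → b ≠ 0 → a * x₀ ^ 2 + b * y₀ ^ 2 = e → x₀ = 0 →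
      ∃ x y : F, x ≠ 0 ∧ y ≠ 0 ∧ a * x ^ 2 + b * y ^ 2 = e := by
    intro a b x₀ y₀ ha hb hxy hx0
    have hy₀ : y₀ ≠ 0 := by
      rintro rfl; rw [hx0] at hxy; simp at hxy; exact he hxy.symm
    -- find m with m ≠ 0, a + b m² ≠ 0, a - b m² ≠ 0
    have hq1 : (C b * X ^ 2 + C a : F[X]).natDegree = 2 := by compute_degree!
    have hq2 : (C b * X ^ 2 - C a : F[X]).natDegree = 2 := by compute_degree!
    have hq1' : (C b * X ^ 2 + C a : F[X]) ≠ 0 := fun h => by simp [h] at hq1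
    have hq2' : (C b * X ^ 2 - C a : F[X]) ≠ 0 := fun h => by simp [h] at hq2
    have hX : (X : F[X]) ≠ 0 := X_ne_zero
    have hprod : (X * (C b * X ^ 2 + C a) * (C b * X ^ 2 - C a) : F[X]) ≠ 0 :=
      mul_ne_zero (mul_ne_zero hX hq1') hq2'
    have hdeg : (X * (C b * X ^ 2 + C a) * (C b * X ^ 2 - C a) : F[X]).natDegree = 5 := by
      rw [natDegree_mul (mul_ne_zero hX hq1') hq2', natDegree_mul hX hq1',
        natDegree_X, hq1, hq2]
    obtain ⟨m, hm⟩ := exists_not_root (X * (C b * X ^ 2 + C a) * (C b * X ^ 2 - C a))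
      hprod (by rw [hdeg]; exact h5)
    simp only [eval_mul, eval_add, eval_sub, eval_pow, eval_C, eval_X, mul_ne_zero_iff] at hm
    obtain ⟨⟨hm0, hmp⟩, hmm⟩ := hm
    refine ⟨-2 * b * y₀ * m / (a + b * m ^ 2), y₀ * (a - b * m ^ 2) / (a + b * m ^ 2),
      ?_, ?_, ?_⟩
    · apply div_ne_zero _ (by intro h; apply hmp; linear_combination h)
      exact mul_ne_zero (mul_ne_zero (mul_ne_zero (neg_ne_zero.mpr h2) hb) hy₀) hm0
    · apply div_ne_zero _ (by intro h; apply hmp; linear_combination h)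
      exact mul_ne_zero hy₀ (by intro h; apply hmm; linear_combination -h)
    · have habm : a + b * m ^ 2 ≠ 0 := by intro h; apply hmp; linear_combination h
      have hy2 : b * y₀ ^ 2 = e := by rw [hx0] at hxy; linear_combination hxy
      field_simp
      ring_nf
      linear_combination (a ^ 2 + 2 * a * b * m ^ 2 + b ^ 2 * m ^ 4) * hy2
  rcases eq_or_ne x₀ 0 with hx | hx
  · exact main a b x₀ y₀ ha hb hxy hx
  rcases eq_or_ne y₀ 0 with hy | hy
  · obtain ⟨y, x, hy', hx', h⟩ := main b a y₀ x₀ hb ha (by linear_combination hxy) hy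
    exact ⟨x, y, hx', hy', by linear_combination h⟩
  exact ⟨x₀, y₀, hx, hy, hxy⟩

/-- Lemma 2.7 of the paper: solving three pairwise independent affine linear equations
with scaled nonzero square values over a finite field of odd order `> 5`. -/
theorem stmt1 {F : Type*} [Field F] [Fintype F]
    (hodd : Odd (Fintype.card F)) (h5 : 5 < Fintype.card F)
    (c₁ c₂ c₃ c₄ c₅ c₆ : F)
    (h14 : c₁ * c₄ - c₂ * c₃ ≠ 0) (h16 : c₁ * c₆ - c₂ * c₅ ≠ 0)
    (h36 : c₃ * c₆ - c₄ * c₅ ≠ 0)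
    (δ₁ δ₂ δ₃ : F) (hδ₁ : δ₁ ≠ 0) (hδ₂ : δ₂ ≠ 0) (hδ₃ : δ₃ ≠ 0)
    (lam₁ lam₂ lam₃ : F) :
    ∃ u v : F, ∃ s₁ s₂ s₃ : F, s₁ ≠ 0 ∧ s₂ ≠ 0 ∧ s₃ ≠ 0 ∧
      c₁ * u + c₂ * v = δ₁ * s₁ ^ 2 + lam₁ ∧
      c₃ * u + c₄ * v = δ₂ * s₂ ^ 2 + lam₂ ∧
      c₅ * u + c₆ * v = δ₃ * s₃ ^ 2 + lam₃ := by
  have hodd' : Fintype.card F % 2 = 1 := Nat.odd_iff.mp hodd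
  set D := c₁ * c₄ - c₂ * c₃ with hD
  set α := (c₄ * c₅ - c₃ * c₆) / D with hα
  set β := (c₁ * c₆ - c₂ * c₅) / D with hβ
  have hαne : α ≠ 0 := div_ne_zero (fun h => h36 (by linear_combination -h)) h14
  have hβne : β ≠ 0 := div_ne_zero h16 h14
  have hc5 : c₅ = α * c₁ + β * c₃ := by
    rw [hα, hβ]; field_simp; ring
  have hc6 : c₆ = α * c₂ + β * c₄ := by
    rw [hα, hβ]; field_simp; ring
  set d := lam₃ - α * lam₁ - β * lam₂ with hd
  -- choose s₃ ≠ 0 with d + δ₃ s₃² ≠ 0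
  obtain ⟨s₃, hs₃⟩ := exists_not_root (X * (C δ₃ * X ^ 2 + C d))
    (mul_ne_zero X_ne_zero (fun h => hδ₃ (by
      have := congrArg (fun p => coeff p 2) h
      simpa using this)))
    (by
      have h1 : (C δ₃ * X ^ 2 + C d : F[X]).natDegree = 2 := by compute_degree!
      have : (X * (C δ₃ * X ^ 2 + C d) : F[X]).natDegree ≤ 3 := by
        calc _ ≤ (X : F[X]).natDegree + (C δ₃ * X ^ 2 + C d : F[X]).natDegree :=
              natDegree_mul_le
        _ = 3 := by rw [natDegree_X, h1]
      omega)
  simp only [eval_mul, eval_add, eval_pow, eval_C, eval_X, mul_ne_zero_iff] at hs₃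
  obtain ⟨hs₃0, hs₃e⟩ := hs₃
  obtain ⟨s₁, s₂, hs₁, hs₂, heq⟩ := key hodd' h5 (α * δ₁) (β * δ₂) (d + δ₃ * s₃ ^ 2)
    (mul_ne_zero hαne hδ₁) (mul_ne_zero hβne hδ₂)
    (fun h => hs₃e (by linear_combination h))
  set x := δ₁ * s₁ ^ 2 + lam₁ with hx
  set y := δ₂ * s₂ ^ 2 + lam₂ with hy
  refine ⟨(c₄ * x - c₂ * y) / D, (c₁ * y - c₃ * x) / D, s₁, s₂, s₃, hs₁, hs₂, hs₃0, ?_, ?_, ?_⟩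
  · field_simp; ring
  · field_simp; ring
  · rw [hc5, hc6]
    have hkey : α * x + β * y = δ₃ * s₃ ^ 2 + lam₃ := by
      rw [hx, hy]; linear_combination heq
    field_simp
    linear_combination D * hkey
end
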